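/- Let E be a real inner product space, θ ≥ 0 a real number, v ∈ E, and x₁, …, xₙ ∈ E. Define w := v + θ • ∑ⱼ ⟪v, xⱼ⟫ • xⱼ. Then w = 0 if and only if v = 0. -/

import Mathlib

open scoped RealInnerProductSpace

section

variable {E ι : Type*} [NormedAddCommGroup E] [InnerProductSpace ℝ E]

theorem real_inner_add_smul_sum_inner_smul (θ : ℝ) (v : E) (s : Finset ι) (x : ι → E) :
    ⟪v, v + θ • ∑ j ∈ s, ⟪v, x j⟫ • x j⟫ = ‖v‖ ^ 2 + θ * ∑ j ∈ s, ⟪v, x j⟫ ^ 2 := by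
  simp only [inner_add_right, inner_smul_right, inner_sum, real_inner_self_eq_norm_sq, sq]

theorem eq_zero_of_add_smul_sum_inner_smul_eq_zero {θ : ℝ} (hθ : 0 ≤ θ) {v : E} {s : Finset ι}
    {x : ι → E} (h : v + θ • ∑ j ∈ s, ⟪v, x j⟫ • x j = 0) : v = 0 := by
  have hsum : 0 ≤ θ * ∑ j ∈ s, ⟪v, x j⟫ ^ 2 :=
    mul_nonneg hθ (Finset.sum_nonneg fun j _ => sq_nonneg _)
  have hinner := real_inner_add_smul_sum_inner_smul θ v s x
  rw [h, inner_zero_right] at hinner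
  have hnorm : ‖v‖ ^ 2 = 0 := by linarith [sq_nonneg ‖v‖]
  simpa using hnorm

end

theorem stmt1 {E : Type*} [NormedAddCommGroup E] [InnerProductSpace ℝ E]
    (θ : ℝ) (hθ : 0 ≤ θ) (v : E) {n : ℕ} (x : Fin n → E) (w : E)
    (hw : w = v + θ • ∑ j, ⟪v, x j⟫ • x j) :
    w = 0 ↔ v = 0 := by
  subst hw
  constructor
  · exact eq_zero_of_add_smul_sum_inner_smul_eq_zero hθ
  · rintro rfl
    simp
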